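/- Every tree T such that (T, S) ∈ 𝒯 for some labeling S satisfies γ_t(T)/γ_sp(T) = 4/3. -/

import Mathlib

open SimpleGraph

/-- `S` is a super dominating set of `G`: every vertex `u ∉ S` has some `v ∈ S`
with `N(v) ∩ Sᶜ = {u}`. -/
def SuperDomSet {V : Type} (G : SimpleGraph V) (S : Set V) : Prop :=
  ∀ u ∈ Sᶜ, ∃ v ∈ S, G.neighborSet v ∩ Sᶜ = {u}

/-- The super domination number `γ_sp(G)`. -/
noncomputable def superDomNum {V : Type} (G : SimpleGraph V) : ℕ :=
  sInf {n | ∃ S : Set V, SuperDomSet G S ∧ S.ncard = n}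

/-- `S` is a dominating set of `G`. -/
def DomSet {V : Type} (G : SimpleGraph V) (S : Set V) : Prop :=
  ∀ u ∉ S, ∃ v ∈ S, G.Adj v u

/-- The domination number `γ(G)`. -/
noncomputable def domNum {V : Type} (G : SimpleGraph V) : ℕ :=
  sInf {n | ∃ S : Set V, DomSet G S ∧ S.ncard = n}

/-- `S` is a total dominating set of `G`: every vertex has a neighbor in `S`. -/
def TotalDomSet {V : Type} (G : SimpleGraph V) (S : Set V) : Prop :=
  ∀ u : V, ∃ v ∈ S, G.Adj v u

/-- The total domination number `γ_t(G)`. -/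
noncomputable def totalDomNum {V : Type} (G : SimpleGraph V) : ℕ :=
  sInf {n | ∃ S : Set V, TotalDomSet G S ∧ S.ncard = n}

/-- A leaf is a vertex of degree 1. -/
def IsLeaf {V : Type} (G : SimpleGraph V) (v : V) : Prop :=
  (G.neighborSet v).ncard = 1

/-- A support vertex is a vertex adjacent to a leaf. -/
def IsSupport {V : Type} (G : SimpleGraph V) (v : V) : Prop :=
  ∃ u, G.Adj v u ∧ IsLeaf G u

/-- Attach a path `u₁u₂u₃u₄u₅u₆` (indices `0,…,5`) to `G` together with the edge
joining `u₃` (index `2`) to `v`. -/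
def attachPath6 {V : Type} (G : SimpleGraph V) (v : V) : SimpleGraph (V ⊕ Fin 6) where
  Adj x y :=
    match x, y with
    | Sum.inl a, Sum.inl b => G.Adj a b
    | Sum.inl a, Sum.inr i => a = v ∧ (i : ℕ) = 2
    | Sum.inr i, Sum.inl a => a = v ∧ (i : ℕ) = 2
    | Sum.inr i, Sum.inr j => (SimpleGraph.pathGraph 6).Adj i j
  symm := by
    constructor
    rintro (a | i) (b | j) h
    · exact h.symm
    · exact h
    · exact h
    · exact (SimpleGraph.pathGraph 6).symm.symm _ _ h
  loopless := by
    constructor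
    rintro (a | i) h
    · exact G.loopless.irrefl a h
    · exact (SimpleGraph.pathGraph 6).loopless.irrefl i h

/-- Vertex statuses for labeled trees. -/
inductive Status : Type
  | A | B | C
deriving DecidableEq

/-- The labeling of the (attached or base) path `P₆`: statuses `C,A,B,B,A,C`. -/
def pathLabel : Fin 6 → Status := fun i =>
  if (i : ℕ) = 0 ∨ (i : ℕ) = 5 then Status.C
  else if (i : ℕ) = 1 ∨ (i : ℕ) = 4 then Status.A
  else Status.B

/-- The family 𝒯 of labeled trees: it contains `(P₆, S₀)` (leaves labeled `C`,
support vertices labeled `A`, middle vertices labeled `B`) and is closed under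
operation 𝒪: for a vertex `v` of status `B`, attach a path `u₁…u₆` by the edge
`u₃v`, labeling `u₁,…,u₆` with `C,A,B,B,A,C`. -/
inductive InT : (W : Type) → SimpleGraph W → (W → Status) → Prop
  | base : InT (Fin 6) (SimpleGraph.pathGraph 6) pathLabel
  | step {W : Type} {G : SimpleGraph W} {L : W → Status} (h : InT W G L)
      (v : W) (hv : L v = Status.B) :
      InT (W ⊕ Fin 6) (attachPath6 G v)
        (fun x => match x with | Sum.inl a => L a | Sum.inr i => pathLabel i)

/-!
A tree of `𝒯` built with `k` copies of `P₆` has `6k` vertices, `2k` of status `A` and `2k` of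
status `B`.

A super dominating set `S` injects `Sᶜ` into `S` (each vertex outside `S` has a private witness),
so `γ_sp ≥ n / 2` in every graph. A super dominating set of size `3k` is built along the
construction: from each new path take `{u₂, u₃, u₆}` if `v` is already in the set and
`{u₁, u₄, u₅}` otherwise, so that the edge `u₃v` never joins two vertices outside the set.

Every `A`-vertex is the support of a `C`-leaf, so a total dominating set contains it together
with one of its neighbours. The `A`-vertices have pairwise disjoint closed neighbourhoods, hence
`γ_t ≥ 4k`, and the `A`- and `B`-vertices form a total dominating set of that size.
-/

def SimpleGraph.closedNeighborSet {V : Type} (G : SimpleGraph V) (v : V) : Set V :=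
  insert v (G.neighborSet v)

lemma Set.ncard_image_inl_union_image_inr {α β : Type*} [Finite α] [Finite β] (s : Set α)
    (t : Set β) : (Sum.inl '' s ∪ Sum.inr '' t : Set (α ⊕ β)).ncard = s.ncard + t.ncard := by
  rw [Set.ncard_union_eq Set.disjoint_image_inl_image_inr,
    Set.ncard_image_of_injective _ Sum.inl_injective,
    Set.ncard_image_of_injective _ Sum.inr_injective]

section Domination

variable {V : Type} {G : SimpleGraph V}

lemma SuperDomSet.ncard_compl_le [Finite V] {S : Set V} (hS : SuperDomSet G S) :
    Sᶜ.ncard ≤ S.ncard := by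
  choose! w hwS hw using hS
  have hinj : Sᶜ.InjOn w := fun u hu u' hu' h =>
    Set.singleton_eq_singleton_iff.1 ((hw u hu).symm.trans (h ▸ hw u' hu'))
  calc Sᶜ.ncard = (w '' Sᶜ).ncard := hinj.ncard_image.symm
    _ ≤ S.ncard := Set.ncard_le_ncard (Set.image_subset_iff.2 hwS)

lemma superDomNum_eq [Finite V] {S : Set V} (hS : SuperDomSet G S)
    (hcard : Nat.card V = 2 * S.ncard) : superDomNum G = S.ncard := by
  refine IsLeast.csInf_eq ⟨⟨S, hS, rfl⟩, ?_⟩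
  rintro _ ⟨T, hT, rfl⟩
  have := Set.ncard_add_ncard_compl T
  have := hT.ncard_compl_le
  omega

lemma TotalDomSet.two_mul_ncard_le [Finite V] {S A : Set V} (hS : TotalDomSet G S)
    (hleaf : ∀ a ∈ A, ∃ c, G.neighborSet c = {a})
    (hA : A.PairwiseDisjoint G.closedNeighborSet) : 2 * A.ncard ≤ S.ncard := by
  choose! d hdS hd using hS
  have hAS : A ⊆ S := fun a ha => by
    obtain ⟨c, hc⟩ := hleaf a ha
    have hdc : d c ∈ G.neighborSet c := (hd c).symm
    rw [hc, Set.mem_singleton_iff] at hdc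
    exact hdc ▸ hdS c
  have hd_mem : ∀ a, d a ∈ G.closedNeighborSet a := fun a => Or.inr (hd a).symm
  have hinj : A.InjOn d := fun a ha b hb h =>
    hA.elim ha hb (Set.not_disjoint_iff.2 ⟨d a, hd_mem a, h ▸ hd_mem b⟩)
  have hdisj : Disjoint A (d '' A) := by
    refine Set.disjoint_left.2 ?_
    rintro _ ha ⟨b, hb, rfl⟩
    have hab : d b = b := hA.elim ha hb (Set.not_disjoint_iff.2 ⟨d b, Or.inl rfl, hd_mem b⟩)
    exact G.ne_of_adj (hd b) hab
  calc 2 * A.ncard = (A ∪ d '' A).ncard := by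
        rw [Set.ncard_union_eq hdisj, hinj.ncard_image, two_mul]
    _ ≤ S.ncard :=
        Set.ncard_le_ncard (Set.union_subset hAS (Set.image_subset_iff.2 fun a _ => hdS a))

lemma totalDomNum_eq [Finite V] {S A : Set V} (hS : TotalDomSet G S)
    (hleaf : ∀ a ∈ A, ∃ c, G.neighborSet c = {a})
    (hA : A.PairwiseDisjoint G.closedNeighborSet) (hcard : S.ncard = 2 * A.ncard) :
    totalDomNum G = S.ncard := by
  refine IsLeast.csInf_eq ⟨⟨S, hS, rfl⟩, ?_⟩
  rintro _ ⟨T, hT, rfl⟩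
  exact hcard ▸ hT.two_mul_ncard_le hleaf hA

end Domination

section AttachPath6

variable {W : Type} {G : SimpleGraph W} {v : W}

@[simp] lemma attachPath6_adj_inl_inl {a b : W} :
    (attachPath6 G v).Adj (.inl a) (.inl b) ↔ G.Adj a b := Iff.rfl

@[simp] lemma attachPath6_adj_inl_inr {a : W} {i : Fin 6} :
    (attachPath6 G v).Adj (.inl a) (.inr i) ↔ a = v ∧ i = 2 := by
  simp [attachPath6, Fin.ext_iff]

@[simp] lemma attachPath6_adj_inr_inl {a : W} {i : Fin 6} :
    (attachPath6 G v).Adj (.inr i) (.inl a) ↔ a = v ∧ i = 2 := by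
  simp [attachPath6, Fin.ext_iff]

@[simp] lemma attachPath6_adj_inr_inr {i j : Fin 6} :
    (attachPath6 G v).Adj (.inr i) (.inr j) ↔ (pathGraph 6).Adj i j := Iff.rfl

lemma attachPath6_neighborSet_inl {a : W} (ha : a ≠ v) :
    (attachPath6 G v).neighborSet (.inl a) = .inl '' G.neighborSet a := by
  ext (b | j) <;> simp [ha]

lemma attachPath6_neighborSet_inr {i : Fin 6} (hi : i ≠ 2) :
    (attachPath6 G v).neighborSet (.inr i) = .inr '' (pathGraph 6).neighborSet i := by
  ext (b | j) <;> simp [hi]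

lemma attachPath6_closedNeighborSet_inl {a : W} (ha : a ≠ v) :
    (attachPath6 G v).closedNeighborSet (.inl a) = .inl '' G.closedNeighborSet a := by
  rw [closedNeighborSet, closedNeighborSet, attachPath6_neighborSet_inl ha, Set.image_insert_eq]

lemma attachPath6_closedNeighborSet_inr {i : Fin 6} (hi : i ≠ 2) :
    (attachPath6 G v).closedNeighborSet (.inr i) = .inr '' (pathGraph 6).closedNeighborSet i := by
  rw [closedNeighborSet, closedNeighborSet, attachPath6_neighborSet_inr hi, Set.image_insert_eq]

lemma TotalDomSet.attachPath6 {S : Set W} {P : Set (Fin 6)} (hS : TotalDomSet G S)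
    (hP : TotalDomSet (pathGraph 6) P) :
    TotalDomSet (attachPath6 G v) (.inl '' S ∪ .inr '' P) := by
  rintro (a | i)
  · obtain ⟨b, hb, hba⟩ := hS a
    exact ⟨.inl b, .inl ⟨b, hb, rfl⟩, hba⟩
  · obtain ⟨j, hj, hji⟩ := hP i
    exact ⟨.inr j, .inr ⟨j, hj, rfl⟩, hji⟩

lemma SuperDomSet.attachPath6 {S : Set W} {P : Set (Fin 6)} (hS : SuperDomSet G S)
    (hP : SuperDomSet (pathGraph 6) P) (hv : v ∈ S ↔ 2 ∈ P) :
    SuperDomSet (attachPath6 G v) (.inl '' S ∪ .inr '' P) := by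
  rintro (a | i) hu
  · obtain ⟨b, hb, hba⟩ := hS a (by simpa using hu)
    refine ⟨.inl b, .inl ⟨b, hb, rfl⟩, ?_⟩
    ext (c | j)
    · simpa using Set.ext_iff.1 hba c
    · suffices b = v → j = 2 → j ∈ P by simpa
      rintro rfl rfl
      exact hv.1 hb
  · obtain ⟨j, hj, hji⟩ := hP i (by simpa using hu)
    refine ⟨.inr j, .inr ⟨j, hj, rfl⟩, ?_⟩
    ext (c | k)
    · suffices c = v → j = 2 → c ∈ S by simpa
      rintro rfl rfl
      exact hv.2 hj
    · simpa using Set.ext_iff.1 hji k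

lemma pairwiseDisjoint_closedNeighborSet_attachPath6 {A : Set W} {P : Set (Fin 6)}
    (hA : A.PairwiseDisjoint G.closedNeighborSet) (hvA : v ∉ A)
    (hP : P.PairwiseDisjoint (pathGraph 6).closedNeighborSet) (h2P : 2 ∉ P) :
    (.inl '' A ∪ .inr '' P).PairwiseDisjoint (attachPath6 G v).closedNeighborSet := by
  have hinl : ∀ a ∈ A, (attachPath6 G v).closedNeighborSet (.inl a) =
      .inl '' G.closedNeighborSet a := fun a ha =>
    attachPath6_closedNeighborSet_inl (ne_of_mem_of_not_mem ha hvA)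
  have hinr : ∀ i ∈ P, (attachPath6 G v).closedNeighborSet (.inr i) =
      .inr '' (pathGraph 6).closedNeighborSet i := fun i hi =>
    attachPath6_closedNeighborSet_inr (ne_of_mem_of_not_mem hi h2P)
  refine Set.PairwiseDisjoint.union ?_ ?_ ?_
  · rintro _ ⟨a, ha, rfl⟩ _ ⟨b, hb, rfl⟩ hab
    rw [Function.onFun, hinl a ha, hinl b hb, Set.disjoint_image_iff Sum.inl_injective]
    exact hA ha hb (fun h => hab (h ▸ rfl))
  · rintro _ ⟨i, hi, rfl⟩ _ ⟨j, hj, rfl⟩ hij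
    rw [Function.onFun, hinr i hi, hinr j hj, Set.disjoint_image_iff Sum.inr_injective]
    exact hP hi hj (fun h => hij (h ▸ rfl))
  · rintro _ ⟨a, ha, rfl⟩ _ ⟨i, hi, rfl⟩ -
    rw [hinl a ha, hinr i hi]
    exact Set.disjoint_image_inl_image_inr

end AttachPath6

lemma pathLabel_preimage_A : pathLabel ⁻¹' {Status.A} = {1, 4} := by
  ext i; fin_cases i <;> simp [pathLabel]

lemma pathLabel_preimage_compl_C : pathLabel ⁻¹' {Status.C}ᶜ = {1, 2, 3, 4} := by
  ext i; fin_cases i <;> simp [pathLabel]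

lemma pathGraph6_exists_leaf : ∀ i ∈ ({1, 4} : Set (Fin 6)),
    ∃ c, pathLabel c = Status.C ∧ c ≠ 2 ∧ (pathGraph 6).neighborSet c = {i} := by
  simp only [Set.ext_iff, mem_neighborSet, pathGraph_adj, Set.mem_insert_iff, Set.mem_singleton_iff]
  decide

lemma pathGraph6_pairwiseDisjoint :
    ({1, 4} : Set (Fin 6)).PairwiseDisjoint (pathGraph 6).closedNeighborSet := by
  simp only [Set.PairwiseDisjoint, Set.Pairwise, Function.onFun, Set.disjoint_left,
    closedNeighborSet, mem_neighborSet, pathGraph_adj, Set.mem_insert_iff, Set.mem_singleton_iff]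
  decide

lemma pathGraph6_totalDomSet : TotalDomSet (pathGraph 6) {1, 2, 3, 4} := by
  simp only [TotalDomSet, pathGraph_adj, Set.mem_insert_iff, Set.mem_singleton_iff]
  decide

lemma pathGraph6_superDomSet_125 : SuperDomSet (pathGraph 6) {1, 2, 5} := by
  simp only [SuperDomSet, Set.ext_iff, Set.mem_compl_iff, Set.mem_inter_iff, mem_neighborSet,
    pathGraph_adj, Set.mem_insert_iff, Set.mem_singleton_iff]
  decide

lemma pathGraph6_superDomSet_034 : SuperDomSet (pathGraph 6) {0, 3, 4} := by
  simp only [SuperDomSet, Set.ext_iff, Set.mem_compl_iff, Set.mem_inter_iff, mem_neighborSet,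
    pathGraph_adj, Set.mem_insert_iff, Set.mem_singleton_iff]
  decide

structure TreeInvariant {W : Type} (G : SimpleGraph W) (L : W → Status) (k : ℕ) : Prop where
  card_eq : Nat.card W = 6 * k
  ncard_A : (L ⁻¹' {Status.A}).ncard = 2 * k
  ncard_notC : (L ⁻¹' {Status.C}ᶜ).ncard = 4 * k
  exists_leaf : ∀ a ∈ L ⁻¹' {Status.A}, ∃ c, L c = Status.C ∧ G.neighborSet c = {a}
  pairwiseDisjoint : (L ⁻¹' {Status.A}).PairwiseDisjoint G.closedNeighborSet
  totalDomSet : TotalDomSet G (L ⁻¹' {Status.C}ᶜ)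
  exists_superDomSet : ∃ S, SuperDomSet G S ∧ S.ncard = 3 * k

lemma TreeInvariant.pathGraph : TreeInvariant (pathGraph 6) pathLabel 1 where
  card_eq := by simp
  ncard_A := by rw [pathLabel_preimage_A, Set.ncard_pair (by decide)]
  ncard_notC := by rw [pathLabel_preimage_compl_C, Set.ncard_eq_toFinset_card']; rfl
  exists_leaf := by
    rw [pathLabel_preimage_A]
    intro i hi
    obtain ⟨c, hc, -, hci⟩ := pathGraph6_exists_leaf i hi
    exact ⟨c, hc, hci⟩
  pairwiseDisjoint := pathLabel_preimage_A ▸ pathGraph6_pairwiseDisjoint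
  totalDomSet := pathLabel_preimage_compl_C ▸ pathGraph6_totalDomSet
  exists_superDomSet :=
    ⟨_, pathGraph6_superDomSet_125, by rw [Set.ncard_eq_toFinset_card']; rfl⟩

section Step

variable {W : Type} [Finite W] {G : SimpleGraph W} {L : W → Status} {k : ℕ} {v : W}

lemma TreeInvariant.attachPath6 (h : TreeInvariant G L k) (hv : L v = Status.B) :
    TreeInvariant (attachPath6 G v) (Sum.elim L pathLabel) (k + 1) where
  card_eq := by rw [Nat.card_sum, h.card_eq, Nat.card_fin]; ring
  ncard_A := by
    rw [Set.preimage_sumElim, Set.ncard_image_inl_union_image_inr, h.ncard_A, pathLabel_preimage_A,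
      Set.ncard_pair (by decide)]
    ring
  ncard_notC := by
    rw [Set.preimage_sumElim, Set.ncard_image_inl_union_image_inr, h.ncard_notC,
      pathLabel_preimage_compl_C, Set.ncard_eq_toFinset_card']
    rfl
  exists_leaf := by
    rw [Set.preimage_sumElim, pathLabel_preimage_A]
    rintro _ (⟨a, ha, rfl⟩ | ⟨i, hi, rfl⟩)
    · obtain ⟨c, hc, hca⟩ := h.exists_leaf a ha
      have hcv : c ≠ v := fun hcv => by simp [hcv, hv] at hc
      exact ⟨.inl c, hc, by rw [attachPath6_neighborSet_inl hcv, hca, Set.image_singleton]⟩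
    · obtain ⟨c, hc, hc2, hci⟩ := pathGraph6_exists_leaf i hi
      exact ⟨.inr c, hc, by rw [attachPath6_neighborSet_inr hc2, hci, Set.image_singleton]⟩
  pairwiseDisjoint := by
    have hvA : v ∉ L ⁻¹' {Status.A} := by simp [hv]
    rw [Set.preimage_sumElim, pathLabel_preimage_A]
    exact pairwiseDisjoint_closedNeighborSet_attachPath6 h.pairwiseDisjoint hvA
      pathGraph6_pairwiseDisjoint (by decide)
  totalDomSet := by
    rw [Set.preimage_sumElim, pathLabel_preimage_compl_C]
    exact h.totalDomSet.attachPath6 pathGraph6_totalDomSet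
  exists_superDomSet := by
    obtain ⟨S, hS, hcard⟩ := h.exists_superDomSet
    by_cases hvS : v ∈ S
    · refine ⟨_, hS.attachPath6 pathGraph6_superDomSet_125 (by simp [hvS]), ?_⟩
      rw [Set.ncard_image_inl_union_image_inr, hcard, Set.ncard_eq_toFinset_card']
      rfl
    · refine ⟨_, hS.attachPath6 pathGraph6_superDomSet_034 (by simp [hvS]), ?_⟩
      rw [Set.ncard_image_inl_union_image_inr, hcard, Set.ncard_eq_toFinset_card']
      rfl

end Step

lemma InT.finite {W : Type} {G : SimpleGraph W} {L : W → Status} (h : InT W G L) : Finite W := by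
  induction h with
  | base => infer_instance
  | step _ _ _ ih => have := ih; infer_instance

lemma InT.exists_treeInvariant {W : Type} {G : SimpleGraph W} {L : W → Status} (h : InT W G L) :
    ∃ k, TreeInvariant G L k := by
  induction h with
  | base => exact ⟨1, .pathGraph⟩
  | @step W G L h v hv ih =>
    have := h.finite
    obtain ⟨k, hk⟩ := ih
    have hlabel : (fun x => match x with | Sum.inl a => L a | Sum.inr i => pathLabel i) =
        Sum.elim L pathLabel := by
      funext x
      cases x <;> rfl
    exact ⟨k + 1, hlabel ▸ hk.attachPath6 hv⟩

/-- Every tree `T` with `(T, S) ∈ 𝒯` for some labeling `S` satisfies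
`γ_t(T)/γ_sp(T) = 4/3`. -/
theorem totalDomNum_superDomNum_ratio {W : Type} {G : SimpleGraph W} {L : W → Status}
    (h : InT W G L) :
    3 * totalDomNum G = 4 * superDomNum G := by
  have := h.finite
  obtain ⟨k, hk⟩ := h.exists_treeInvariant
  obtain ⟨S, hS, hScard⟩ := hk.exists_superDomSet
  have hleaf : ∀ a ∈ L ⁻¹' {Status.A}, ∃ c, G.neighborSet c = {a} := fun a ha =>
    (hk.exists_leaf a ha).imp fun _ => And.right
  rw [totalDomNum_eq hk.totalDomSet hleaf hk.pairwiseDisjoint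
      (by rw [hk.ncard_notC, hk.ncard_A]; ring),
    superDomNum_eq hS (by rw [hk.card_eq, hScard]; ring), hk.ncard_notC, hScard]
  ring
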